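/- Let F be a regular flow on ℝ² and let s₁, s₂ be two distinct inseparable orbits of F. If there exist p ∈ s₁ and q ∈ s₂ with (p, q) ∈ P_F, then (z, w) ∈ P_F for every z ∈ s₁ and every w ∈ s₂ (so the relation s₁ ≻ s₂ does not depend on the choice of points). -/

import Mathlib

open Set Filter Topology

/-- A (continuous-time) flow on a topological space. -/
def IsFlow {X : Type*} [TopologicalSpace X] (F : ℝ → X → X) : Prop :=
  Continuous (fun q : ℝ × X => F q.1 q.2) ∧ (∀ x, F 0 x = x) ∧
    ∀ t s x, F t (F s x) = F (t + s) x

/-- The forward orbit O⁺(p). -/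
def fwdOrbit {X : Type*} (F : ℝ → X → X) (p : X) : Set X :=
  {q | ∃ t : ℝ, 0 ≤ t ∧ F t p = q}

/-- The backward orbit O⁻(p). -/
def bwdOrbit {X : Type*} (F : ℝ → X → X) (p : X) : Set X :=
  {q | ∃ t : ℝ, t ≤ 0 ∧ F t p = q}

/-- The orbit O(p) = O⁻(p) ∪ O⁺(p). -/
def flowOrbit {X : Type*} (F : ℝ → X → X) (p : X) : Set X :=
  bwdOrbit F p ∪ fwdOrbit F p

/-- The orbit relation O_F. -/
def orbitRel {X : Type*} (F : ℝ → X → X) : Set (X × X) :=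
  {z | z.2 ∈ fwdOrbit F z.1}

/-- The prolongational relation P_F: the closure of the orbit relation. -/
def prolongRel {X : Type*} [TopologicalSpace X] (F : ℝ → X → X) : Set (X × X) :=
  closure (orbitRel F)

/-- Down(p) = {q | (p,q) ∈ P_F}. -/
def downSet {X : Type*} [TopologicalSpace X] (F : ℝ → X → X) (p : X) : Set X :=
  {q | (p, q) ∈ prolongRel F}

/-- The first prolongational limit set Λ¹(p). -/
def lambda1 {X : Type*} [MetricSpace X] (F : ℝ → X → X) (p : X) : Set X :=
  {q | ∀ ε > (0 : ℝ), ∀ T > (0 : ℝ), ∃ x : X, ∃ t : ℝ,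
    T ≤ t ∧ dist x p < ε ∧ dist (F t x) q < ε}

/-- The first prolongation D¹(p). -/
def prolong1 {X : Type*} [MetricSpace X] (F : ℝ → X → X) (p : X) : Set X :=
  {q | ∀ ε > (0 : ℝ), ∃ x : X, ∃ t : ℝ, 0 < t ∧ dist x p < ε ∧ dist (F t x) q < ε}

/-- The set NW_F of non-wandering points. -/
def nonWanderingSet {X : Type*} [MetricSpace X] (F : ℝ → X → X) : Set X :=
  {p | p ∈ lambda1 F p}

/-- A flow is wandering when it has no non-wandering point. -/
def IsWandering {X : Type*} [MetricSpace X] (F : ℝ → X → X) : Prop :=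
  nonWanderingSet F = ∅

/-- The ω-limit set of p. -/
def omegaLimitSet {X : Type*} [TopologicalSpace X] (F : ℝ → X → X) (p : X) : Set X :=
  {q | ∃ t : ℕ → ℝ, Tendsto t atTop atTop ∧ Tendsto (fun n => F (t n) p) atTop (𝓝 q)}

/-- The α-limit set of p. -/
def alphaLimitSet {X : Type*} [TopologicalSpace X] (F : ℝ → X → X) (p : X) : Set X :=
  {q | ∃ t : ℕ → ℝ, Tendsto t atTop atBot ∧ Tendsto (fun n => F (t n) p) atTop (𝓝 q)}

/-- The plane with the Euclidean distance. -/
abbrev Plane := EuclideanSpace ℝ (Fin 2)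

/-- A flow on the plane is regular if near every point it is locally topologically
equivalent to the flow of a constant vector field: there is a homeomorphism of a
neighborhood onto an open set sending the local orbits into horizontal lines. -/
def IsRegularFlow (F : ℝ → Plane → Plane) : Prop :=
  ∀ p : Plane, ∃ U V : Set Plane, IsOpen U ∧ IsOpen V ∧ p ∈ U ∧
    ∃ φ : U ≃ₜ V, ∀ q y : U, (y : Plane) ∈ flowOrbit F (q : Plane) →
      (φ y : Plane) 1 = (φ q : Plane) 1

/-- A set is saturated if it contains the full orbit of each of its points. -/
def FlowSaturated (F : ℝ → Plane → Plane) (A : Set Plane) : Prop :=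
  ∀ p ∈ A, flowOrbit F p ⊆ A

/-- Two (distinct) orbits are inseparable if any two saturated open sets containing
them respectively must intersect. -/
def OrbitsInseparable (F : ℝ → Plane → Plane) (s₁ s₂ : Set Plane) : Prop :=
  ∀ U₁ U₂ : Set Plane, IsOpen U₁ → IsOpen U₂ → FlowSaturated F U₁ → FlowSaturated F U₂ →
    s₁ ⊆ U₁ → s₂ ⊆ U₂ → (U₁ ∩ U₂).Nonempty

/-- s is an orbit of F. -/
def IsOrbit (F : ℝ → Plane → Plane) (s : Set Plane) : Prop :=
  ∃ a : Plane, s = flowOrbit F a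

/-- A separatrix: an orbit inseparable from some other orbit. -/
def IsSeparatrix (F : ℝ → Plane → Plane) (s : Set Plane) : Prop :=
  IsOrbit F s ∧ ∃ s' : Set Plane, IsOrbit F s' ∧ s' ≠ s ∧ OrbitsInseparable F s s'

/-- s₁ ≻ s₂ : the distinct inseparable orbits s₁, s₂ satisfy (p,q) ∈ P_F for some
p ∈ s₁, q ∈ s₂. -/
def OrbPrec (F : ℝ → Plane → Plane) (s₁ s₂ : Set Plane) : Prop :=
  s₁ ≠ s₂ ∧ OrbitsInseparable F s₁ s₂ ∧ ∃ p ∈ s₁, ∃ q ∈ s₂, (p, q) ∈ prolongRel F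

/-!
If `(p, q) ∈ P_F` but `q` is not on the orbit of `p`, then `(p, q)` is a limit of pairs
`(x, F t x)` with arbitrarily large times `t`: the pairs joined by times in a compact interval
`[0, T]` form a closed set that misses `(p, q)`. Flowing the first coordinate for time `s` and
the second for time `u` keeps such pairs in `O_F` once `t ≥ s - u`, so by continuity
`(F s p, F u q) ∈ P_F` for all `s, u`.
-/

section Prolongation

variable {X : Type*} {F : ℝ → X → X}

lemma mem_flowOrbit_iff {a x : X} : x ∈ flowOrbit F a ↔ ∃ t : ℝ, F t a = x := by
  constructor
  · rintro (⟨t, _, ht⟩ | ⟨t, _, ht⟩) <;> exact ⟨t, ht⟩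
  · rintro ⟨t, ht⟩
    rcases le_total t 0 with h | h
    · exact Or.inl ⟨t, h, ht⟩
    · exact Or.inr ⟨t, h, ht⟩

def orbitRelUpTo (F : ℝ → X → X) (T : ℝ) : Set (X × X) :=
  {z | ∃ t ∈ Icc 0 T, F t z.1 = z.2}

def orbitRelFrom (F : ℝ → X → X) (T : ℝ) : Set (X × X) :=
  {z | ∃ t, T ≤ t ∧ F t z.1 = z.2}

lemma orbitRel_subset_orbitRelUpTo_union_orbitRelFrom (T : ℝ) :
    orbitRel F ⊆ orbitRelUpTo F T ∪ orbitRelFrom F T := by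
  rintro z ⟨t, ht, hz⟩
  rcases le_total t T with h | h
  · exact Or.inl ⟨t, ⟨ht, h⟩, hz⟩
  · exact Or.inr ⟨t, h, hz⟩

variable [TopologicalSpace X]

lemma flowOrbit_eq_of_mem (hF : IsFlow F) {a p : X} (h : p ∈ flowOrbit F a) :
    flowOrbit F a = flowOrbit F p := by
  obtain ⟨r, rfl⟩ := mem_flowOrbit_iff.1 h
  ext x
  simp only [mem_flowOrbit_iff, hF.2.2]
  exact ⟨fun ⟨t, ht⟩ => ⟨t - r, by rwa [sub_add_cancel]⟩, fun ⟨t, ht⟩ => ⟨t + r, ht⟩⟩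

lemma isClosed_orbitRelUpTo [T2Space X] (hF : IsFlow F) (T : ℝ) :
    IsClosed (orbitRelUpTo F T) := by
  have hgraph : IsClosed {w : Icc (0 : ℝ) T × (X × X) | F w.1 w.2.1 = w.2.2} :=
    isClosed_eq (hF.1.comp (continuous_subtype_val.comp continuous_fst |>.prodMk
      continuous_snd.fst)) continuous_snd.snd
  convert isClosedMap_snd_of_compactSpace _ hgraph using 1
  ext z
  exact ⟨fun ⟨t, ht, hz⟩ => ⟨(⟨t, ht⟩, z), hz, rfl⟩, fun ⟨w, hw, hwz⟩ => ⟨w.1, w.1.2, hwz ▸ hw⟩⟩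

lemma mem_closure_orbitRelFrom [T2Space X] (hF : IsFlow F) {p q : X}
    (hpq : (p, q) ∈ prolongRel F) (hqp : q ∉ flowOrbit F p) (T : ℝ) :
    (p, q) ∈ closure (orbitRelFrom F T) := by
  have hsub := closure_mono (orbitRel_subset_orbitRelUpTo_union_orbitRelFrom (F := F) T)
  rw [closure_union, (isClosed_orbitRelUpTo hF T).closure_eq] at hsub
  refine (hsub hpq).resolve_left ?_
  rintro ⟨t, -, ht⟩
  exact hqp (mem_flowOrbit_iff.2 ⟨t, ht⟩)

lemma mapsTo_orbitRelFrom (hF : IsFlow F) (s u : ℝ) :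
    MapsTo (Prod.map (F s) (F u)) (orbitRelFrom F (s - u)) (orbitRel F) := by
  rintro ⟨x, y⟩ ⟨t, ht, (rfl : F t x = y)⟩
  refine ⟨u + t - s, by linarith, ?_⟩
  simp only [Prod.map, hF.2.2]
  ring_nf

lemma prolongRel_flow_prodMap [T2Space X] (hF : IsFlow F) {p q : X}
    (hpq : (p, q) ∈ prolongRel F) (hqp : q ∉ flowOrbit F p) (s u : ℝ) :
    (F s p, F u q) ∈ prolongRel F :=
  map_mem_closure (f := Prod.map (F s) (F u))
    ((hF.1.comp (continuous_const.prodMk continuous_id)).prodMap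
      (hF.1.comp (continuous_const.prodMk continuous_id)))
    (mem_closure_orbitRelFrom hF hpq hqp (s - u)) (mapsTo_orbitRelFrom hF s u)

end Prolongation

theorem stmt_11_general (F : ℝ → Plane → Plane) (hF : IsFlow F)
    (a b : Plane) (hne : flowOrbit F a ≠ flowOrbit F b)
    (p q : Plane) (hp : p ∈ flowOrbit F a) (hq : q ∈ flowOrbit F b)
    (hpq : (p, q) ∈ prolongRel F) :
    ∀ z ∈ flowOrbit F a, ∀ w ∈ flowOrbit F b, (z, w) ∈ prolongRel F := by
  intro z hz w hw
  rw [flowOrbit_eq_of_mem hF hp] at hz hne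
  rw [flowOrbit_eq_of_mem hF hq] at hw hne
  obtain ⟨s, rfl⟩ := mem_flowOrbit_iff.1 hz
  obtain ⟨u, rfl⟩ := mem_flowOrbit_iff.1 hw
  exact prolongRel_flow_prodMap hF hpq (fun hqp => hne (flowOrbit_eq_of_mem hF hqp)) s u

/-- For distinct inseparable orbits, the relation s₁ ≻ s₂ does not depend on the
choice of points: one pair in P_F forces all pairs to be in P_F. -/
theorem stmt_11 (F : ℝ → Plane → Plane) (hF : IsFlow F) (hreg : IsRegularFlow F)
    (a b : Plane) (hne : flowOrbit F a ≠ flowOrbit F b)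
    (hins : OrbitsInseparable F (flowOrbit F a) (flowOrbit F b))
    (p q : Plane) (hp : p ∈ flowOrbit F a) (hq : q ∈ flowOrbit F b)
    (hpq : (p, q) ∈ prolongRel F) :
    ∀ z ∈ flowOrbit F a, ∀ w ∈ flowOrbit F b, (z, w) ∈ prolongRel F :=
  stmt_11_general F hF a b hne p q hp hq hpq
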